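/- arXiv:1405.2299 — 6 statements merged into one kernel-verified Lean document; each statement's English description precedes it below -/
import Mathlib

section
/- Let P be a finite poset, let a ∈ P, let P' = P∖{a} with the induced order, and let P_a = {a' ∈ P' : a' < a}. Then for every k ∈ ℕ, as polynomials in the indeterminate q: [P choose k]_q = Σ_{j=0}^{k} q^j · ( q^{wt_P(a)} · [P' : j ⊆ P_a, k−j−1]_q + [P' : j ⊆ P_a, k−j]_q ). -/
open Polynomial Finset

variable {α : Type*} [DecidableEq α] [PartialOrder α]
  [DecidableRel ((· < ·) : α → α → Prop)]

/-- Weight of an element `x` relative to the poset given by the finset `Q`: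
the number of elements of `Q` strictly above `x`. -/
def pwt (Q : Finset α) (x : α) : ℕ := (Q.filter (fun b => x < b)).card

/-- Weight of a subset `A` relative to `Q`. -/
def pwtS (Q A : Finset α) : ℕ := ∑ a ∈ A, pwt Q a

/-- The poset `q`-binomial coefficient `[Q choose k]_q`. -/
noncomputable def pbinom (Q : Finset α) (k : ℕ) : Polynomial ℤ :=
  ∑ A ∈ Q.powersetCard k, X ^ pwtS Q A

/-- Sum over subsets of `A` of given integer cardinality `j` (zero when `j < 0`),
with weights taken relative to `Q`. -/
noncomputable def psum (Q A : Finset α) (j : ℤ) : Polynomial ℤ :=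
  if 0 ≤ j then ∑ B ∈ A.powersetCard j.toNat, X ^ pwtS Q B else 0

/-- The restricted two-part coefficient `[Q : j ⊆ S, i]_q`. -/
noncomputable def twoPart (Q S : Finset α) (j i : ℤ) : Polynomial ℤ :=
  psum Q S j * psum Q (Q \ S) i


/-!
Split the `k`-subsets of `P` according to whether they contain `a`. Deleting `a` lowers `wt(x)`
by one exactly when `x < a`, so `wt_P(A) = wt_{P'}(A) + #(A ∩ P_a)` for `A ⊆ P'`; cutting such an
`A` into its parts of sizes `j` and `k - j` in `P_a` and `P' ∖ P_a` produces `q^j` times the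
two-part coefficient. A subset containing `a` is `a` together with `k - 1` elements of `P'`, and
contributes the extra factor `q^{wt_P(a)}`.
-/

open Finset

theorem Finset.sum_powersetCard_union {ι β : Type*} [DecidableEq ι] [AddCommMonoid β]
    {S T : Finset ι} (h : Disjoint S T) (m : ℕ) (f : Finset ι → β) :
    ∑ A ∈ (S ∪ T).powersetCard m, f A =
      ∑ p ∈ antidiagonal m, ∑ B ∈ S.powersetCard p.1, ∑ C ∈ T.powersetCard p.2, f (B ∪ C) := by
  have union_inter_left {B C : Finset ι} (hB : B ⊆ S) (hC : C ⊆ T) : (B ∪ C) ∩ S = B := by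
    grind [disjoint_left]
  have union_inter_right {B C : Finset ι} (hB : B ⊆ S) (hC : C ⊆ T) : (B ∪ C) ∩ T = C := by
    grind [disjoint_left]
  rw [← sum_fiberwise_of_maps_to (g := fun A => (#(A ∩ S), #(A ∩ T))) (t := antidiagonal m)]
  · refine sum_congr rfl fun p hp => ?_
    rw [← sum_product']
    refine (sum_bij' (fun BC _ => BC.1 ∪ BC.2) (fun A _ => (A ∩ S, A ∩ T)) ?_ ?_ ?_ ?_ ?_).symm
    · rintro ⟨B, C⟩ hBC
      obtain ⟨hB, hC⟩ := mem_product.1 hBC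
      rw [mem_powersetCard] at hB hC
      rw [HasAntidiagonal.mem_antidiagonal] at hp
      rw [mem_filter, mem_powersetCard, union_inter_left hB.1 hC.1, union_inter_right hB.1 hC.1,
        card_union_of_disjoint (h.mono hB.1 hC.1), hB.2, hC.2]
      exact ⟨⟨union_subset_union hB.1 hC.1, hp⟩, rfl⟩
    · intro A hA
      simp only [mem_filter, mem_powersetCard, mem_product] at hA ⊢
      grind
    · rintro ⟨B, C⟩ hBC
      simp only [mem_product, mem_powersetCard] at hBC
      rw [union_inter_left hBC.1.1 hBC.2.1, union_inter_right hBC.1.1 hBC.2.1]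
    · intro A hA
      simp only [mem_filter, mem_powersetCard] at hA
      rw [← inter_union_distrib_left, inter_eq_left.2 hA.1.1]
    · intros; rfl
  · intro A hA
    rw [mem_powersetCard] at hA
    rw [HasAntidiagonal.mem_antidiagonal,
      ← card_union_of_disjoint (h.mono inter_subset_right inter_subset_right),
      ← inter_union_distrib_left, inter_eq_left.2 hA.1, hA.2]

omit [DecidableEq α] in
lemma psum_natCast (Q A : Finset α) (m : ℕ) :
    psum Q A m = ∑ B ∈ A.powersetCard m, X ^ pwtS Q B := by
  simp [psum]

lemma twoPart_of_neg (Q S : Finset α) (j : ℤ) {i : ℤ} (hi : i < 0) : twoPart Q S j i = 0 := by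
  simp [twoPart, psum, not_le.2 hi]

section Insert

variable {Q : Finset α} {a : α}

lemma pwt_insert (ha : a ∉ Q) (x : α) :
    pwt (insert a Q) x = pwt Q x + if x < a then 1 else 0 := by
  unfold pwt
  rw [filter_insert]
  split_ifs
  · rw [card_insert_of_notMem (fun h => ha (mem_of_mem_filter a h))]
  · rfl

lemma pwtS_insert (ha : a ∉ Q) (A : Finset α) :
    pwtS (insert a Q) A = pwtS Q A + #(A.filter (· < a)) := by
  simp only [pwtS, pwt_insert ha, sum_add_distrib, sum_boole, Nat.cast_id]

lemma sum_powersetCard_pow_pwtS_insert (ha : a ∉ Q) (m : ℕ) :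
    ∑ A ∈ Q.powersetCard m, (X : ℤ[X]) ^ pwtS (insert a Q) A =
      ∑ j ∈ range (m + 1), X ^ j * twoPart Q (Q.filter (· < a)) j (m - j) := by
  set S := Q.filter (· < a)
  have hQ : S ∪ (Q \ S) = Q := union_sdiff_of_subset (filter_subset _ _)
  have pwtS_union {B C : Finset α} (hB : B ⊆ S) (hC : C ⊆ Q \ S) :
      pwtS (insert a Q) (B ∪ C) = #B + (pwtS Q B + pwtS Q C) := by
    have : (B ∪ C).filter (· < a) = B := by grind
    rw [pwtS_insert ha, this]
    unfold pwtS
    rw [sum_union (disjoint_sdiff.mono hB hC)]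
    ring
  calc ∑ A ∈ Q.powersetCard m, (X : ℤ[X]) ^ pwtS (insert a Q) A
      = ∑ p ∈ antidiagonal m, ∑ B ∈ S.powersetCard p.1, ∑ C ∈ (Q \ S).powersetCard p.2,
          X ^ pwtS (insert a Q) (B ∪ C) := by
        have := sum_powersetCard_union (disjoint_sdiff : Disjoint S (Q \ S)) m
          fun A => (X : ℤ[X]) ^ pwtS (insert a Q) A
        rwa [hQ] at this
    _ = ∑ p ∈ antidiagonal m, X ^ p.1 * twoPart Q S p.1 p.2 := by
        refine sum_congr rfl fun p _ => ?_
        rw [twoPart, psum_natCast, psum_natCast, sum_mul_sum, mul_sum]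
        refine sum_congr rfl fun B hB => ?_
        rw [mul_sum]
        refine sum_congr rfl fun C hC => ?_
        rw [mem_powersetCard] at hB hC
        rw [pwtS_union hB.1 hC.1, hB.2, pow_add, pow_add]
    _ = ∑ j ∈ range (m + 1), X ^ j * twoPart Q S j (m - j) := by
        rw [Nat.sum_antidiagonal_eq_sum_range_succ (fun j i => X ^ j * twoPart Q S j i)]
        refine sum_congr rfl fun j hj => ?_
        rw [Nat.cast_sub (by simpa [Nat.lt_succ_iff] using hj)]

lemma pbinom_insert_succ (ha : a ∉ Q) (n : ℕ) :
    pbinom (insert a Q) (n + 1) =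
      ∑ A ∈ Q.powersetCard (n + 1), X ^ pwtS (insert a Q) A +
        X ^ pwt (insert a Q) a * ∑ A ∈ Q.powersetCard n, X ^ pwtS (insert a Q) A := by
  have notMem_of_mem {A : Finset α} (hA : A ∈ Q.powersetCard n) : a ∉ A :=
    fun h => ha ((mem_powersetCard.1 hA).1 h)
  have hdisj : Disjoint (Q.powersetCard (n + 1)) ((Q.powersetCard n).image (insert a)) := by
    grind [disjoint_left]
  rw [pbinom, powersetCard_succ_insert ha, sum_union hdisj, sum_image, mul_sum]
  · refine congrArg _ (sum_congr rfl fun A hA => ?_)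
    rw [← pow_add, pwtS, sum_insert (notMem_of_mem hA), pwtS]
  · intro A hA B hB hAB
    rw [← erase_insert (notMem_of_mem hA), hAB, erase_insert (notMem_of_mem hB)]

theorem pbinom_insert (ha : a ∉ Q) (k : ℕ) :
    pbinom (insert a Q) k =
      ∑ j ∈ range (k + 1), X ^ j *
        (X ^ pwt (insert a Q) a * twoPart Q (Q.filter (· < a)) j ((k : ℤ) - j - 1) +
          twoPart Q (Q.filter (· < a)) j ((k : ℤ) - j)) := by
  simp only [mul_add, sum_add_distrib]
  rw [← sum_powersetCard_pow_pwtS_insert ha]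
  cases k with
  | zero => simp [pbinom, twoPart_of_neg]
  | succ n =>
    rw [pbinom_insert_succ ha, add_comm, sum_range_succ, sum_powersetCard_pow_pwtS_insert ha n,
      twoPart_of_neg _ _ _ (by omega), mul_zero, mul_zero, add_zero, mul_sum]
    refine congrArg₂ _ (sum_congr rfl fun j _ => ?_) rfl
    rw [show ((n + 1 : ℕ) : ℤ) - j - 1 = n - j by omega, mul_left_comm]

end Insert

theorem stmt0 (P : Finset α) (a : α) (ha : a ∈ P) (k : ℕ) :
    pbinom P k =
      ∑ j ∈ Finset.range (k + 1),
        X ^ j *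
          (X ^ pwt P a *
              twoPart (P \ {a}) ((P \ {a}).filter (fun b => b < a)) (j : ℤ) ((k : ℤ) - j - 1)
            + twoPart (P \ {a}) ((P \ {a}).filter (fun b => b < a)) (j : ℤ) ((k : ℤ) - j)) := by
  have hP : insert a (P \ {a}) = P := by
    rw [sdiff_singleton_eq_erase, insert_erase ha]
  have := pbinom_insert (Q := P \ {a}) (a := a) (by simp) k
  rwa [hP] at this
end

section
/- Let λ be a set partition of N = {1,…,n} and let A ⊆ N satisfy A ∩ epl(λ) = ∅. Then nst_A^λ = #{(j,l) ∈ A × epr(λ) : j < l} − #{(j,i) ∈ A × epl(λ) : j < i}. -/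
/-- A set partition of `{1, …, n}` (modelled as `Fin n`), recorded as its set of arcs:
pairs `(i, j)` with `i < j` such that distinct arcs have distinct left endpoints and
distinct right endpoints. -/
def IsSP (n : ℕ) (lam : Finset (Fin n × Fin n)) : Prop :=
  (∀ p ∈ lam, p.1 < p.2) ∧ ∀ p ∈ lam, ∀ q ∈ lam, (p.1 = q.1 ↔ p.2 = q.2)

/-- The set of left endpoints. -/
def epl {n : ℕ} (lam : Finset (Fin n × Fin n)) : Finset (Fin n) := lam.image Prod.fst

/-- The set of right endpoints. -/
def epr {n : ℕ} (lam : Finset (Fin n × Fin n)) : Finset (Fin n) := lam.image Prod.snd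

/-- `nst_A^λ = #{((i,l), j) ∈ λ × A : i < j < l}`. -/
def nst {n : ℕ} (lam : Finset (Fin n × Fin n)) (A : Finset (Fin n)) : ℕ :=
  ((lam ×ˢ A).filter (fun x => x.1.1 < x.2 ∧ x.2 < x.1.2)).card

/-!
For an arc `(i, l)` the points of `A` left of `l` are those strictly between `i` and `l`
together with those left of `i`, because `i ∉ A`. Summing over the arcs gives the identity,
since `(i, l) ↦ l` and `(i, l) ↦ i` are injective on a set partition.
-/

open Finset

lemma card_filter_lt_eq_card_filter_between_add {α : Type*} [LinearOrder α] (A : Finset α)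
    {a b : α} (hab : a < b) (ha : a ∉ A) :
    #{j ∈ A | j < b} = #{j ∈ A | a < j ∧ j < b} + #{j ∈ A | j < a} := by
  rw [← card_union_of_disjoint (disjoint_filter.2 fun j _ h h' => h.1.not_gt h'), ← filter_or]
  refine congrArg card (filter_congr fun j hj => ?_)
  have hja : j ≠ a := ne_of_mem_of_not_mem hj ha
  constructor
  · intro hjb
    exact (lt_or_gt_of_ne hja).elim Or.inr fun haj => Or.inl ⟨haj, hjb⟩
  · rintro (⟨-, hjb⟩ | hja)
    exacts [hjb, hja.trans hab]

lemma card_filter_lt_product_image {α β : Type*} [LinearOrder α] [DecidableEq β]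
    (A : Finset α) (s : Finset β) {f : β → α} (hf : Set.InjOn f s) :
    #{p ∈ A ×ˢ s.image f | p.1 < p.2} = ∑ b ∈ s, #{j ∈ A | j < f b} := by
  simp only [card_filter, sum_product_right, sum_image hf]

namespace IsSP

variable {n : ℕ} {lam : Finset (Fin n × Fin n)}

lemma injOn_fst (hlam : IsSP n lam) : Set.InjOn Prod.fst (lam : Set (Fin n × Fin n)) :=
  fun p hp q hq h => Prod.ext h ((hlam.2 p hp q hq).1 h)

lemma injOn_snd (hlam : IsSP n lam) : Set.InjOn Prod.snd (lam : Set (Fin n × Fin n)) :=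
  fun p hp q hq h => Prod.ext ((hlam.2 p hp q hq).2 h) h

end IsSP

lemma nst_eq_sum {n : ℕ} (lam : Finset (Fin n × Fin n)) (A : Finset (Fin n)) :
    nst lam A = ∑ p ∈ lam, #{j ∈ A | p.1 < j ∧ j < p.2} := by
  simp only [nst, card_filter, sum_product]

theorem stmt4 {n : ℕ} (lam : Finset (Fin n × Fin n)) (hlam : IsSP n lam)
    (A : Finset (Fin n)) (hA : A ∩ epl lam = ∅) :
    (nst lam A : ℤ) =
      (((A ×ˢ epr lam).filter (fun p => p.1 < p.2)).card : ℤ)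
        - (((A ×ˢ epl lam).filter (fun p => p.1 < p.2)).card : ℤ) := by
  have hsplit : ∀ p ∈ lam,
      #{j ∈ A | j < p.2} = #{j ∈ A | p.1 < j ∧ j < p.2} + #{j ∈ A | j < p.1} := fun p hp =>
    card_filter_lt_eq_card_filter_between_add A (hlam.1 p hp) fun hpA =>
      disjoint_left.1 (disjoint_iff_inter_eq_empty.2 hA) hpA (mem_image_of_mem _ hp)
  rw [epr, epl, card_filter_lt_product_image A lam hlam.injOn_snd,
    card_filter_lt_product_image A lam hlam.injOn_fst, sum_congr rfl hsplit, sum_add_distrib,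
    nst_eq_sum]
  push_cast
  ring
end

section
/- For every set partition λ of N = {1,…,n} there exists a unique noncrossing set partition λ' of N with epl(λ') = epl(λ) and epr(λ') = epr(λ). -/
/-- `λ` is noncrossing: it has no pair of arcs `(i,k), (j,l)` with `i < j < k < l`. -/
def Noncrossing {n : ℕ} (lam : Finset (Fin n × Fin n)) : Prop :=
  ∀ p ∈ lam, ∀ q ∈ lam, ¬ (p.1 < q.1 ∧ q.1 < p.2 ∧ p.2 < q.2)

/-!
Let `j` be the smallest right endpoint and `i` the largest left endpoint to the left of `j`.
In a noncrossing partition with these endpoint sets, `(i, j)` must be an arc: the arc ending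
at `j` cannot start further left, since it would cross the arc starting at `i`. Removing it and
inducting gives uniqueness. For existence, the endpoint sets `L, R` of any partition satisfy
the ballot condition (for every `t`, at most as many right endpoints `≤ t` as left endpoints
`< t`). This condition survives removing `i` and `j`, and adding the arc `(i, j)` to the
noncrossing partition obtained by induction creates no crossing, as no endpoint lies
strictly between `i` and `j`.
-/

open Finset

section

variable {n : ℕ}

def IsBallot (L R : Finset (Fin n)) : Prop :=
  #L = #R ∧ ∀ t, #{x ∈ R | x ≤ t} ≤ #{x ∈ L | x < t}

section Arcs

variable {mu nu : Finset (Fin n × Fin n)}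

lemma fst_mem_epl {p : Fin n × Fin n} (hp : p ∈ mu) : p.1 ∈ epl mu :=
  mem_image_of_mem _ hp

lemma snd_mem_epr {p : Fin n × Fin n} (hp : p ∈ mu) : p.2 ∈ epr mu :=
  mem_image_of_mem _ hp

@[simp]
lemma epl_insert (p : Fin n × Fin n) (mu : Finset (Fin n × Fin n)) :
    epl (insert p mu) = insert p.1 (epl mu) :=
  image_insert _ _ _

@[simp]
lemma epr_insert (p : Fin n × Fin n) (mu : Finset (Fin n × Fin n)) :
    epr (insert p mu) = insert p.2 (epr mu) :=
  image_insert _ _ _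

lemma IsSP.injOn_fst_s6 (h : IsSP n mu) : Set.InjOn Prod.fst (mu : Set (Fin n × Fin n)) :=
  fun p hp q hq hpq => Prod.ext hpq ((h.2 p hp q hq).mp hpq)

lemma IsSP.injOn_snd_s6 (h : IsSP n mu) : Set.InjOn Prod.snd (mu : Set (Fin n × Fin n)) :=
  fun p hp q hq hpq => Prod.ext ((h.2 p hp q hq).mpr hpq) hpq

lemma IsSP.mono (h : IsSP n mu) (hnu : nu ⊆ mu) : IsSP n nu :=
  ⟨fun p hp => h.1 p (hnu hp), fun p hp q hq => h.2 p (hnu hp) q (hnu hq)⟩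

lemma IsSP.insert (h : IsSP n mu) {i j : Fin n} (hij : i < j) (hi : i ∉ epl mu)
    (hj : j ∉ epr mu) : IsSP n (insert (i, j) mu) := by
  have hnew : ∀ q ∈ mu, q.1 ≠ i ∧ q.2 ≠ j := fun q hq =>
    ⟨fun h => hi (h ▸ fst_mem_epl hq), fun h => hj (h ▸ snd_mem_epr hq)⟩
  refine ⟨forall_mem_insert _ _ _ |>.2 ⟨hij, h.1⟩, fun p hp q hq => ?_⟩
  rcases mem_insert.1 hp with rfl | hp <;> rcases mem_insert.1 hq with rfl | hq
  · exact iff_of_true rfl rfl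
  · exact iff_of_false (hnew q hq).1.symm (hnew q hq).2.symm
  · exact iff_of_false (hnew p hp).1 (hnew p hp).2
  · exact h.2 p hp q hq

lemma IsSP.epl_erase (h : IsSP n mu) {p : Fin n × Fin n} (hp : p ∈ mu) :
    epl (mu.erase p) = (epl mu).erase p.1 := by
  rw [epl, epl, ← sdiff_singleton_eq_erase, ← sdiff_singleton_eq_erase,
    image_sdiff_of_injOn h.injOn_fst_s6 (singleton_subset_iff.2 hp), image_singleton]

lemma IsSP.epr_erase (h : IsSP n mu) {p : Fin n × Fin n} (hp : p ∈ mu) :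
    epr (mu.erase p) = (epr mu).erase p.2 := by
  rw [epr, epr, ← sdiff_singleton_eq_erase, ← sdiff_singleton_eq_erase,
    image_sdiff_of_injOn h.injOn_snd_s6 (singleton_subset_iff.2 hp), image_singleton]

lemma IsSP.isBallot (h : IsSP n mu) : IsBallot (epl mu) (epr mu) := by
  refine ⟨by rw [epl, epr, card_image_of_injOn h.injOn_fst_s6, card_image_of_injOn h.injOn_snd_s6],
    fun t => ?_⟩
  set S := {p ∈ mu | p.2 ≤ t}
  have hS : (S : Set (Fin n × Fin n)) ⊆ mu := coe_subset.2 (filter_subset _ _)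
  calc #{x ∈ epr mu | x ≤ t} = #(S.image Prod.snd) := by rw [epr, filter_image]
    _ = #S := card_image_of_injOn (h.injOn_snd_s6.mono hS)
    _ = #(S.image Prod.fst) := (card_image_of_injOn (h.injOn_fst_s6.mono hS)).symm
    _ ≤ #{x ∈ epl mu | x < t} := card_le_card <| image_subset_iff.2 fun p hp =>
      have hp := mem_filter.1 hp
      mem_filter.2 ⟨fst_mem_epl hp.1, (h.1 p hp.1).trans_le hp.2⟩

lemma Noncrossing.mono (h : Noncrossing mu) (hnu : nu ⊆ mu) : Noncrossing nu :=
  fun p hp q hq => h p (hnu hp) q (hnu hq)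

lemma Noncrossing.insert (h : Noncrossing mu) {i j : Fin n}
    (hmu : ∀ q ∈ mu, q.1 ∉ Set.Ioo i j ∧ q.2 ∉ Set.Ioo i j) :
    Noncrossing (insert (i, j) mu) := by
  intro p hp q hq hpq
  rcases mem_insert.1 hp with rfl | hp <;> rcases mem_insert.1 hq with rfl | hq
  · exact lt_irrefl _ hpq.1
  · exact (hmu q hq).1 ⟨hpq.1, hpq.2.1⟩
  · exact (hmu p hp).2 ⟨hpq.2.1, hpq.2.2⟩
  · exact h p hp q hq hpq

lemma Noncrossing.innermost_mem (hnc : Noncrossing mu) (hsp : IsSP n mu) {i j : Fin n}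
    (hi : i ∈ epl mu) (hj : j ∈ epr mu) (hij : i < j) (hjmin : ∀ r ∈ epr mu, j ≤ r)
    (himax : ∀ x ∈ epl mu, x < j → x ≤ i) : (i, j) ∈ mu := by
  obtain ⟨p, hp, rfl⟩ := mem_image.1 hj
  obtain ⟨q, hq, rfl⟩ := mem_image.1 hi
  have hpq : p.1 ≤ q.1 := himax _ (fst_mem_epl hp) (hsp.1 p hp)
  rcases hpq.lt_or_eq with hlt | heq
  · have hne : p.2 ≠ q.2 := fun he => hlt.ne ((hsp.2 p hp q hq).2 he)
    exact absurd ⟨hlt, hij, (hjmin _ (snd_mem_epr hq)).lt_of_ne hne⟩ (hnc p hp q hq)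
  · rwa [← heq]

end Arcs

section Ballot

variable {L R : Finset (Fin n)}

lemma IsBallot.exists_innermost (h : IsBallot L R) (hR : R.Nonempty) :
    ∃ i ∈ L, ∃ j ∈ R, i < j ∧ (∀ r ∈ R, j ≤ r) ∧ ∀ x ∈ L, x < j → x ≤ i := by
  have hbefore : ({x ∈ L | x < R.min' hR} : Finset (Fin n)).Nonempty :=
    have hmin : R.min' hR ∈ ({x ∈ R | x ≤ R.min' hR} : Finset (Fin n)) :=
      mem_filter.2 ⟨R.min'_mem hR, le_rfl⟩
    card_pos.1 <| (card_pos.2 ⟨_, hmin⟩).trans_le (h.2 _)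
  obtain ⟨hiL, hij⟩ := mem_filter.1 (max'_mem _ hbefore)
  exact ⟨_, hiL, _, R.min'_mem hR, hij, fun r hr => R.min'_le r hr,
    fun x hx hxj => le_max' _ x (mem_filter.2 ⟨hx, hxj⟩)⟩

lemma IsBallot.erase (h : IsBallot L R) {i j : Fin n} (hi : i ∈ L) (hj : j ∈ R) (hij : i < j)
    (hjmin : ∀ r ∈ R, j ≤ r) : IsBallot (L.erase i) (R.erase j) := by
  refine ⟨by rw [card_erase_of_mem hi, card_erase_of_mem hj, h.1], fun t => ?_⟩
  by_cases ht : j ≤ t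
  · have hjt : j ∈ ({x ∈ R | x ≤ t} : Finset (Fin n)) := mem_filter.2 ⟨hj, ht⟩
    have hit : i ∈ ({x ∈ L | x < t} : Finset (Fin n)) := mem_filter.2 ⟨hi, hij.trans_le ht⟩
    rw [filter_erase, filter_erase, card_erase_of_mem hjt, card_erase_of_mem hit]
    exact Nat.sub_le_sub_right (h.2 t) 1
  · have hempty : {x ∈ R.erase j | x ≤ t} = ∅ := filter_eq_empty_iff.2 fun x hx hxt =>
      ht ((hjmin x (mem_of_mem_erase hx)).trans hxt)
    simp [hempty]

lemma IsBallot.exists_noncrossing (h : IsBallot L R) :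
    ∃ mu, IsSP n mu ∧ Noncrossing mu ∧ epl mu = L ∧ epr mu = R := by
  induction hk : #R generalizing L R with
  | zero =>
    have hR : R = ∅ := card_eq_zero.1 hk
    have hL : L = ∅ := card_eq_zero.1 (h.1.trans hk)
    exact ⟨∅, ⟨by simp, by simp⟩, by simp [Noncrossing], by simp [epl, hL], by simp [epr, hR]⟩
  | succ k ih =>
    obtain ⟨i, hi, j, hj, hij, hjmin, himax⟩ := h.exists_innermost (card_pos.1 (by omega))
    obtain ⟨mu, hsp, hnc, hl, hr⟩ :=
      ih (h.erase hi hj hij hjmin) (by rw [card_erase_of_mem hj, hk, Nat.add_sub_cancel])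
    have houtside : ∀ q ∈ mu, q.1 ∉ Set.Ioo i j ∧ q.2 ∉ Set.Ioo i j := by
      intro q hq
      have hq1 : q.1 ∈ L := mem_of_mem_erase (hl ▸ fst_mem_epl hq)
      have hq2 : q.2 ∈ R := mem_of_mem_erase (hr ▸ snd_mem_epr hq)
      exact ⟨fun hq' => not_lt.2 (himax _ hq1 hq'.2) hq'.1,
        fun hq' => not_lt.2 (hjmin _ hq2) hq'.2⟩
    refine ⟨insert (i, j) mu, hsp.insert hij (by simp [hl]) (by simp [hr]), hnc.insert houtside,
      ?_, ?_⟩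
    · rw [epl_insert, hl, insert_erase hi]
    · rw [epr_insert, hr, insert_erase hj]

end Ballot

theorem Noncrossing.eq_of_epl_eq_of_epr_eq {mu nu : Finset (Fin n × Fin n)} (hmu : IsSP n mu)
    (hnu : IsSP n nu) (hmu' : Noncrossing mu) (hnu' : Noncrossing nu) (hl : epl mu = epl nu)
    (hr : epr mu = epr nu) : mu = nu := by
  induction mu using Finset.strongInduction generalizing nu with | H mu ih =>
  rcases mu.eq_empty_or_nonempty with rfl | hne
  · exact (image_eq_empty.1 (hr.symm.trans (image_empty _))).symm
  obtain ⟨i, hi, j, hj, hij, hjmin, himax⟩ := hmu.isBallot.exists_innermost (hne.image _)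
  have hmem : (i, j) ∈ mu := hmu'.innermost_mem hmu hi hj hij hjmin himax
  have hmem' : (i, j) ∈ nu :=
    hnu'.innermost_mem hnu (hl ▸ hi) (hr ▸ hj) hij (hr ▸ hjmin) (hl ▸ himax)
  have herase : mu.erase (i, j) = nu.erase (i, j) :=
    ih _ (erase_ssubset hmem) (hmu.mono (erase_subset _ _)) (hnu.mono (erase_subset _ _))
      (hmu'.mono (erase_subset _ _)) (hnu'.mono (erase_subset _ _))
      (by rw [hmu.epl_erase hmem, hnu.epl_erase hmem', hl])
      (by rw [hmu.epr_erase hmem, hnu.epr_erase hmem', hr])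
  rw [← insert_erase hmem, ← insert_erase hmem', herase]

end

theorem stmt6 {n : ℕ} (lam : Finset (Fin n × Fin n)) (hlam : IsSP n lam) :
    ∃! lam' : Finset (Fin n × Fin n),
      IsSP n lam' ∧ Noncrossing lam' ∧ epl lam' = epl lam ∧ epr lam' = epr lam := by
  obtain ⟨mu, hsp, hnc, hl, hr⟩ := hlam.isBallot.exists_noncrossing
  refine ⟨mu, ⟨hsp, hnc, hl, hr⟩, fun nu ⟨hsp', hnc', hl', hr'⟩ => ?_⟩
  exact Noncrossing.eq_of_epl_eq_of_epr_eq hsp' hsp hnc' hnc (hl'.trans hl.symm) (hr'.trans hr.symm)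
end

section
/- For all integers 0 ≤ j ≤ k ≤ n and 0 ≤ l ≤ n−1, as polynomials in the indeterminate q: q^{j(j−1)/2 + k(k−1)/2} · [n−l choose j]_q · [n−l choose k]_q = Σ_{m=0}^{j} q^{(j−m)(j−m−1)/2 + (k+m)(k+m−1)/2} · [k+m choose k+m−j]_q · [j choose m]_q · [n−l choose k+m]_q. -/
/-! Write `N = n - l`. The subset-of-subset identity `[N, k+m] [k+m, j] = [N, j] [N-j, k-j+m]`
pulls `[N, j]` out of every term on the right, and what remains is the `q`-Vandermonde expansion
of `[N, k] = [j + (N - j), k]`, reindexed by `m ↦ j - m`; the powers of `q` agree because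
`C(j,2) + C(k,2) + m (k - j + m) = C(j-m,2) + C(k+m,2)`. Symmetry and the subset-of-subset identity
both follow from `[n, k] [k]_q! [n-k]_q! = [n]_q!`. -/

open Polynomial

/-- The Gaussian binomial coefficient `[n choose k]_q` as a polynomial in `q`. -/
noncomputable def gaussBinom : ℕ → ℕ → Polynomial ℤ
  | _, 0 => 1
  | 0, _ + 1 => 0
  | n + 1, k + 1 => gaussBinom n k + X ^ (k + 1) * gaussBinom n (k + 1)

open Finset

@[simp]
lemma gaussBinom_zero_right (n : ℕ) : gaussBinom n 0 = 1 := by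
  cases n <;> rfl

lemma gaussBinom_succ_succ (n k : ℕ) :
    gaussBinom (n + 1) (k + 1) = gaussBinom n k + X ^ (k + 1) * gaussBinom n (k + 1) :=
  rfl

lemma gaussBinom_eq_zero_of_lt {n k : ℕ} (h : n < k) : gaussBinom n k = 0 := by
  induction n generalizing k with
  | zero => obtain ⟨k, rfl⟩ := Nat.exists_eq_add_one.2 h; rfl
  | succ n ih =>
    obtain ⟨k, rfl⟩ := Nat.exists_eq_add_one.2 (Nat.zero_lt_of_lt h)
    rw [gaussBinom_succ_succ, ih (by omega), ih (by omega), mul_zero, add_zero]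

@[simp]
lemma gaussBinom_self (n : ℕ) : gaussBinom n n = 1 := by
  induction n with
  | zero => rfl
  | succ n ih => rw [gaussBinom_succ_succ, ih, gaussBinom_eq_zero_of_lt n.lt_succ_self]; ring

noncomputable def qNat (m : ℕ) : Polynomial ℤ := ∑ i ∈ range m, X ^ i

noncomputable def qFactorial : ℕ → Polynomial ℤ
  | 0 => 1
  | n + 1 => qFactorial n * qNat (n + 1)

lemma qNat_add (a b : ℕ) : qNat (a + b) = qNat a + X ^ a * qNat b := by
  simp only [qNat, sum_range_add, pow_add, mul_sum]

lemma qNat_ne_zero {m : ℕ} (hm : 0 < m) : qNat m ≠ 0 := by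
  intro h
  have := congrArg (eval 1) h
  simp only [qNat, eval_finsetSum, eval_pow, eval_X, one_pow, sum_const, card_range,
    nsmul_eq_mul, mul_one, eval_zero, Nat.cast_eq_zero] at this
  omega

lemma qFactorial_ne_zero (n : ℕ) : qFactorial n ≠ 0 := by
  induction n with
  | zero => exact one_ne_zero
  | succ n ih => exact mul_ne_zero ih (qNat_ne_zero n.succ_pos)

lemma gaussBinom_mul_qFactorial_mul_qFactorial {n k : ℕ} (hk : k ≤ n) :
    gaussBinom n k * qFactorial k * qFactorial (n - k) = qFactorial n := by
  induction n generalizing k with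
  | zero => obtain rfl := Nat.le_zero.1 hk; simp [qFactorial]
  | succ n ih =>
    rcases k with _ | k
    · simp [qFactorial]
    rcases Nat.lt_or_ge k n with hkn | hnk
    · obtain ⟨c, hc⟩ : ∃ c, n - k = c + 1 := ⟨n - k - 1, by omega⟩
      have h₁ := ih (k := k) (by omega)
      have h₂ := ih (k := k + 1) (by omega)
      rw [hc] at h₁
      rw [show n - (k + 1) = c by omega] at h₂
      rw [show n + 1 - (k + 1) = c + 1 by omega, gaussBinom_succ_succ]
      simp only [qFactorial] at h₁ h₂ ⊢
      have hq : qNat (n + 1) = qNat (k + 1) + X ^ (k + 1) * qNat (c + 1) := by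
        rw [← qNat_add]; congr 1; omega
      rw [hq]
      linear_combination qNat (k + 1) * h₁ + X ^ (k + 1) * qNat (c + 1) * h₂
    · obtain rfl : k = n := by omega
      simp [qFactorial]

lemma gaussBinom_symm {n k : ℕ} (hk : k ≤ n) : gaussBinom n (n - k) = gaussBinom n k := by
  have h₁ := gaussBinom_mul_qFactorial_mul_qFactorial hk
  have h₂ := gaussBinom_mul_qFactorial_mul_qFactorial (Nat.sub_le n k)
  rw [Nat.sub_sub_self hk] at h₂
  refine mul_right_cancel₀ (mul_ne_zero (qFactorial_ne_zero k) (qFactorial_ne_zero (n - k))) ?_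
  linear_combination h₂ - h₁

lemma gaussBinom_mul {n a b : ℕ} (hba : b ≤ a) :
    gaussBinom n a * gaussBinom a b = gaussBinom n b * gaussBinom (n - b) (a - b) := by
  rcases Nat.lt_or_ge n a with hna | han
  · rcases Nat.lt_or_ge n b with hnb | hbn
    · simp [gaussBinom_eq_zero_of_lt hna, gaussBinom_eq_zero_of_lt hnb]
    · simp [gaussBinom_eq_zero_of_lt hna, gaussBinom_eq_zero_of_lt (show n - b < a - b by omega)]
  · have h₁ := gaussBinom_mul_qFactorial_mul_qFactorial han
    have h₂ := gaussBinom_mul_qFactorial_mul_qFactorial hba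
    have h₃ := gaussBinom_mul_qFactorial_mul_qFactorial (hba.trans han)
    have h₄ := gaussBinom_mul_qFactorial_mul_qFactorial (Nat.sub_le_sub_right han b)
    rw [Nat.sub_sub_sub_cancel_right hba] at h₄
    refine mul_right_cancel₀ (mul_ne_zero (mul_ne_zero (qFactorial_ne_zero b)
      (qFactorial_ne_zero (a - b))) (qFactorial_ne_zero (n - a))) ?_
    linear_combination gaussBinom n a * qFactorial (n - a) * h₂ + h₁
      - gaussBinom n b * qFactorial b * h₄ - h₃

-- The `q`-Vandermonde identity.
lemma gaussBinom_add_add (a b d : ℕ) :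
    gaussBinom (a + b) (a + d) =
      ∑ m ∈ range (a + 1), X ^ (m * (d + m)) * gaussBinom a (a - m) * gaussBinom b (d + m) := by
  induction a generalizing d with
  | zero => simp
  | succ a ih =>
    set f : ℕ → ℤ[X] := fun m ↦
      X ^ (m * (d + m) + (a + 1 - m)) * gaussBinom a (a + 1 - m) * gaussBinom b (d + m)
    have hpascal : ∀ m ∈ range (a + 1),
        X ^ (m * (d + m)) * gaussBinom (a + 1) (a + 1 - m) * gaussBinom b (d + m) =
          X ^ (m * (d + m)) * gaussBinom a (a - m) * gaussBinom b (d + m) + f m := by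
      intro m hm
      simp only [f, show a + 1 - m = a - m + 1 by grind, gaussBinom_succ_succ, pow_add]
      ring
    have hshift : ∀ m ∈ range (a + 1), f (m + 1) =
        X ^ (a + d + 1) * (X ^ (m * (d + 1 + m)) * gaussBinom a (a - m) *
          gaussBinom b (d + 1 + m)) := by
      intro m hm
      have : (m + 1) * (d + (m + 1)) + (a + 1 - (m + 1)) = a + d + 1 + m * (d + 1 + m) := by
        grind
      simp only [f]
      rw [this, pow_add, show a + 1 - (m + 1) = a - m by omega,
        show d + (m + 1) = d + 1 + m by omega]
      ring
    calc gaussBinom (a + 1 + b) (a + 1 + d)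
        = gaussBinom (a + b) (a + d) + X ^ (a + d + 1) * gaussBinom (a + b) (a + (d + 1)) := by
          rw [show a + 1 + b = a + b + 1 by omega, show a + 1 + d = a + d + 1 by omega,
            gaussBinom_succ_succ, add_assoc a d 1]
      _ = ∑ m ∈ range (a + 1), X ^ (m * (d + m)) * gaussBinom a (a - m) * gaussBinom b (d + m) +
            ∑ m ∈ range (a + 2), f m := by
          rw [ih, ih, sum_range_succ' f, mul_sum, sum_congr rfl hshift]
          simp [f, gaussBinom_eq_zero_of_lt]
      _ = _ := by
          rw [sum_range_succ f, sum_range_succ _ (a + 1), sum_congr rfl hpascal, sum_add_distrib]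
          simp only [f, Nat.sub_self, gaussBinom_zero_right, add_zero]
          ring

lemma triangle_add_triangle_add_mul {j k m : ℕ} (hmj : m ≤ j) (hjk : j ≤ k) :
    j * (j - 1) / 2 + k * (k - 1) / 2 + m * (k - j + m) =
      (j - m) * (j - m - 1) / 2 + (k + m) * (k + m - 1) / 2 := by
  simp only [← Nat.choose_two_right]
  obtain ⟨i, rfl⟩ := Nat.exists_eq_add_of_le hmj
  obtain ⟨d, rfl⟩ := Nat.exists_eq_add_of_le hjk
  rw [Nat.add_sub_cancel_left, Nat.add_sub_cancel_left]
  apply Nat.cast_injective (R := ℚ)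
  push_cast [Nat.cast_choose_two]
  ring

theorem gaussBinom_mul_gaussBinom_eq_sum (N j k : ℕ) (hjk : j ≤ k) :
    X ^ (j * (j - 1) / 2 + k * (k - 1) / 2) * gaussBinom N j * gaussBinom N k =
      ∑ m ∈ range (j + 1),
        X ^ ((j - m) * (j - m - 1) / 2 + (k + m) * (k + m - 1) / 2) *
          gaussBinom (k + m) (k + m - j) * gaussBinom j m * gaussBinom N (k + m) := by
  rcases Nat.lt_or_ge N j with hNj | hjN
  · rw [gaussBinom_eq_zero_of_lt hNj, mul_zero, zero_mul, eq_comm]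
    exact sum_eq_zero fun m _ ↦ by
      rw [gaussBinom_eq_zero_of_lt (n := N) (k := k + m) (by omega), mul_zero]
  have hvandermonde : gaussBinom N k = ∑ m ∈ range (j + 1),
      X ^ (m * (k - j + m)) * gaussBinom j m * gaussBinom (N - j) (k - j + m) := by
    obtain ⟨b, rfl⟩ := Nat.exists_eq_add_of_le hjN
    obtain ⟨d, rfl⟩ := Nat.exists_eq_add_of_le hjk
    simp only [Nat.add_sub_cancel_left, gaussBinom_add_add]
    exact sum_congr rfl fun m hm ↦ by rw [gaussBinom_symm (by grind)]
  rw [hvandermonde, mul_sum]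
  refine sum_congr rfl fun m hm ↦ ?_
  have hmj : m ≤ j := Nat.lt_succ_iff.1 (mem_range.1 hm)
  have hchoose := gaussBinom_mul (n := N) (a := k + m) (b := j) (by omega)
  rw [show k + m - j = k - j + m by omega] at hchoose
  rw [gaussBinom_symm (by omega), ← triangle_add_triangle_add_mul hmj hjk, pow_add]
  linear_combination -X ^ (j * (j - 1) / 2 + k * (k - 1) / 2) * X ^ (m * (k - j + m)) *
    gaussBinom j m * hchoose

theorem stmt12_general (n j k l : ℕ) (hjk : j ≤ k) :
    X ^ (j * (j - 1) / 2 + k * (k - 1) / 2) * gaussBinom (n - l) j * gaussBinom (n - l) k =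
      ∑ m ∈ Finset.range (j + 1),
        X ^ ((j - m) * (j - m - 1) / 2 + (k + m) * (k + m - 1) / 2) *
          gaussBinom (k + m) (k + m - j) * gaussBinom j m * gaussBinom (n - l) (k + m) :=
  gaussBinom_mul_gaussBinom_eq_sum (n - l) j k hjk

theorem stmt12 (n j k l : ℕ) (hjk : j ≤ k) (hkn : k ≤ n) (hl : l ≤ n - 1) :
    X ^ (j * (j - 1) / 2 + k * (k - 1) / 2) * gaussBinom (n - l) j * gaussBinom (n - l) k =
      ∑ m ∈ Finset.range (j + 1),
        X ^ ((j - m) * (j - m - 1) / 2 + (k + m) * (k + m - 1) / 2) *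
          gaussBinom (k + m) (k + m - j) * gaussBinom j m * gaussBinom (n - l) (k + m) :=
  stmt12_general n j k l hjk
end

section
/- For all m, s ∈ ℕ, as polynomials in the indeterminate q: Σ_{k=0}^{m} q^{k(k−1)/2} · φ_k^m(q) · [s choose k]_q = q^{m·s}. -/
/-! The identity is the q-binomial theorem in Newton form,
`x ^ s = ∑ₖ [s choose k]_q (x - 1)(x - q)⋯(x - q^{k-1})`, proved by induction on `s` from
`x · ∏_{j<k} (x - q^j) = ∏_{j<k+1} (x - q^j) + q^k ∏_{j<k} (x - q^j)` and the Pascal recursion.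
At `x = q^m` the product equals `q^{k(k-1)/2} φ_k^m(q)` and vanishes for `k > m`. -/

open Polynomial

/-- `φ_k^m(q) = ∏_{j=0}^{k-1} (q^{m-j} - 1)` as a polynomial in `q`. -/
noncomputable def phiPoly (m k : ℕ) : Polynomial ℤ :=
  ∏ j ∈ Finset.range k, (X ^ (m - j) - 1)

open Finset

noncomputable def qDescPochhammer (x : ℤ[X]) (k : ℕ) : ℤ[X] :=
  ∏ j ∈ range k, (x - X ^ j)

lemma qDescPochhammer_succ (x : ℤ[X]) (k : ℕ) :
    qDescPochhammer x (k + 1) = qDescPochhammer x k * (x - X ^ k) :=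
  prod_range_succ _ _

lemma qDescPochhammer_X_pow_eq_zero {m k : ℕ} (h : m < k) : qDescPochhammer (X ^ m) k = 0 :=
  prod_eq_zero (mem_range.2 h) (sub_self _)

lemma qDescPochhammer_X_pow (m k : ℕ) :
    qDescPochhammer (X ^ m) k = X ^ (k * (k - 1) / 2) * phiPoly m k := by
  rcases lt_or_ge m k with h | h
  · rw [qDescPochhammer_X_pow_eq_zero h, phiPoly,
      prod_eq_zero (mem_range.2 h) (by rw [Nat.sub_self, pow_zero, sub_self]), mul_zero]
  rw [qDescPochhammer, phiPoly, ← sum_range_id, ← prod_pow_eq_pow_sum, ← prod_mul_distrib]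
  refine prod_congr rfl fun j hj => ?_
  rw [mul_sub, mul_one, ← pow_add, Nat.add_sub_cancel' (by grind)]

theorem pow_eq_sum_gaussBinom_mul_qDescPochhammer (x : ℤ[X]) {s N : ℕ} (h : s ≤ N) :
    x ^ s = ∑ k ∈ range (N + 1), gaussBinom s k * qDescPochhammer x k := by
  induction s generalizing N with
  | zero =>
    rw [sum_range_succ']
    simp [gaussBinom, qDescPochhammer]
  | succ s ih =>
    obtain ⟨n, rfl⟩ : ∃ n, N = n + 1 := ⟨N - 1, by omega⟩
    set f := fun k => X ^ k * gaussBinom s k * qDescPochhammer x k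
    have hshift : ∑ k ∈ range (n + 1), f k = ∑ k ∈ range (n + 1), f (k + 1) + 1 := by
      have hf : f (n + 1) = 0 := by simp [f, gaussBinom_eq_zero_of_lt (show s < n + 1 by omega)]
      have := sum_range_succ' f (n + 1)
      rw [sum_range_succ, hf, add_zero] at this
      simpa [f, gaussBinom, qDescPochhammer] using this
    calc x ^ (s + 1) = ∑ k ∈ range (n + 1), gaussBinom s k * (x * qDescPochhammer x k) := by
          rw [pow_succ', ih (N := n) (by omega), mul_sum]
          exact sum_congr rfl fun k _ => by ring
      _ = ∑ k ∈ range (n + 1), gaussBinom s k * qDescPochhammer x (k + 1)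
            + ∑ k ∈ range (n + 1), f k := by
          rw [← sum_add_distrib]
          exact sum_congr rfl fun k _ => by rw [qDescPochhammer_succ]; ring
      _ = _ := by
          rw [hshift, sum_range_succ' _ (n + 1)]
          simp only [f, gaussBinom, add_mul, sum_add_distrib, qDescPochhammer, prod_range_zero]
          ring

theorem stmt14 (m s : ℕ) :
    ∑ k ∈ Finset.range (m + 1),
        (X : Polynomial ℤ) ^ (k * (k - 1) / 2) * phiPoly m k * gaussBinom s k =
      X ^ (m * s) := by
  simp_rw [← qDescPochhammer_X_pow, mul_comm _ (gaussBinom s _)]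
  rw [pow_mul, pow_eq_sum_gaussBinom_mul_qDescPochhammer (X ^ m) (Nat.le_add_left s m)]
  refine sum_subset (range_subset_range.2 (by omega)) fun k _ hk => ?_
  rw [qDescPochhammer_X_pow_eq_zero (by simpa using hk), mul_zero]
end

section
/- Let K be a finite totally ordered set and let L, E ⊆ K be disjoint subsets. Then, as polynomials in the indeterminate q: q^{|L|} + (q−1) · Σ_{j ∈ K∖(L∪E)} q^{#{l∈L : l<j} + #{k∈K : j<k} − #{e∈E : j<e}} = q^{|K|−|E|}. (Each exponent #{l∈L : l<j} + #{k∈K : j<k} − #{e∈E : j<e} is a nonnegative integer since E ⊆ K.) -/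
/-!
Put `M = K \ (L ∪ E)`. For `j ∈ M`, splitting `K` into `L`, `E`, `M` shows that the exponent
of `j` is `|L| + r(j)`, where `r(j)` counts the elements of `M` above `j`. As `j` runs over `M`,
`r(j)` runs over `0, …, |M| - 1`, so the sum is `q^|L|` times a geometric sum, and
`(q - 1)(1 + q + ⋯ + q^(|M|-1)) = q^|M| - 1` telescopes the left side to `q^(|L| + |M|)`.
-/

open Finset Polynomial

namespace Finset

variable {α : Type*} [LinearOrder α]

theorem card_filter_lt_add_card_filter_gt {s : Finset α} {j : α} (hj : j ∉ s) :
    #(s.filter (· < j)) + #(s.filter (j < ·)) = #s := by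
  rw [← card_filter_add_card_filter_not (s := s) (p := (· < j))]
  congr 2
  refine filter_congr fun x hx => ?_
  have hxj : x ≠ j := ne_of_mem_of_not_mem hx hj
  simp only [not_lt]
  exact ⟨le_of_lt, fun h => lt_of_le_of_ne h hxj.symm⟩

theorem sum_comp_card_filter_gt {β : Type*} [AddCommMonoid β] (s : Finset α) (f : ℕ → β) :
    ∑ j ∈ s, f #(s.filter (j < ·)) = ∑ i ∈ range #s, f i := by
  classical
  induction s using induction_on_min with
  | empty => simp
  | insert a s ha ih =>
    have ha' : a ∉ s := fun h => lt_irrefl a (ha a h)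
    have h_above_a : (insert a s).filter (a < ·) = s := by
      rw [filter_insert, if_neg (lt_irrefl a), filter_true_of_mem ha]
    have h_above_j : ∀ j ∈ s, (insert a s).filter (j < ·) = s.filter (j < ·) := fun j hj => by
      rw [filter_insert, if_neg (ha j hj).asymm]
    rw [sum_insert ha', h_above_a, sum_congr rfl fun j hj => by rw [h_above_j j hj], ih,
      card_insert_of_notMem ha', sum_range_succ, add_comm]

theorem card_filter_gt_sub_eq_of_mem_sdiff {K L E : Finset α}
    (hL : L ⊆ K) (hE : E ⊆ K) (hLE : Disjoint L E) {j : α} (hj : j ∈ K \ (L ∪ E)) :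
    #(L.filter (· < j)) + #(K.filter (j < ·)) - #(E.filter (j < ·)) =
      #L + #((K \ (L ∪ E)).filter (j < ·)) := by
  have hsub : L ∪ E ⊆ K := union_subset hL hE
  have hK : #(K.filter (j < ·)) =
      #(L.filter (j < ·)) + #(E.filter (j < ·)) + #((K \ (L ∪ E)).filter (j < ·)) := by
    rw [← union_sdiff_of_subset hsub, filter_union, card_union_of_disjoint
      (disjoint_filter_filter disjoint_sdiff), filter_union,
      card_union_of_disjoint (disjoint_filter_filter hLE), union_sdiff_of_subset hsub]
  have hjL : j ∉ L := fun h => (mem_sdiff.1 hj).2 (mem_union_left E h)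
  have := card_filter_lt_add_card_filter_gt hjL
  omega

end Finset

theorem stmt17 {α : Type*} [LinearOrder α] (K L E : Finset α)
    (hL : L ⊆ K) (hE : E ⊆ K) (hLE : Disjoint L E) :
    (X : Polynomial ℤ) ^ L.card +
        (X - 1) *
          ∑ j ∈ K \ (L ∪ E),
            X ^ ((L.filter (fun l => l < j)).card + (K.filter (fun k => j < k)).card
              - (E.filter (fun e => j < e)).card) =
      X ^ (K.card - E.card) := by
  have hcard : #K - #E = #L + #(K \ (L ∪ E)) := by
    rw [card_sdiff_of_subset (union_subset hL hE), card_union_of_disjoint hLE]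
    have := card_le_card (union_subset hL hE)
    rw [card_union_of_disjoint hLE] at this
    omega
  rw [sum_congr rfl fun j hj => by rw [card_filter_gt_sub_eq_of_mem_sdiff hL hE hLE hj, pow_add],
    ← mul_sum, sum_comp_card_filter_gt (K \ (L ∪ E)) (X ^ ·), mul_left_comm, mul_geom_sum,
    hcard, pow_add]
  ring
end
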